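/- For b ≥ 0 let ψ_b(z) = (e^{-(1/2)(b/(1+b²))²}/√(π(1+b²)))·(z - b(2+b²)/(1+b²))·e^{(b/(1+b²))z - |z|²/2}. Then M(ψ_b) = 1 and G_μ(ψ_b) = 1 + (μ - 1/2)/(1+b²)² for every μ > 0. -/

import Mathlib

open MeasureTheory

noncomputable def Mfun (u : ℂ → ℂ) : ℝ := ∫ z : ℂ, ‖u z‖ ^ 2
noncomputable def Pfun (u : ℂ → ℂ) : ℝ := ∫ z : ℂ, (‖z‖ ^ 2 - 1) * ‖u z‖ ^ 2
noncomputable def Hfun (u : ℂ → ℂ) : ℝ := (1 / 4) * ∫ z : ℂ, ‖u z‖ ^ 4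
noncomputable def Gfun (μ : ℝ) (u : ℂ → ℂ) : ℝ := 8 * Real.pi * Hfun u + μ * Pfun u

/-- The stationary wave
`ψ_b(z) = (e^{-(1/2)(b/(1+b²))²}/√(π(1+b²))) (z - b(2+b²)/(1+b²)) e^{(b/(1+b²))z - |z|²/2}`. -/
noncomputable def psi (b : ℝ) : ℂ → ℂ := fun z =>
  (((Real.exp (-(1 / 2) * (b / (1 + b ^ 2)) ^ 2) / Real.sqrt (Real.pi * (1 + b ^ 2)) : ℝ)) : ℂ) *
    (z - ((b * (2 + b ^ 2) / (1 + b ^ 2) : ℝ) : ℂ)) *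
    Complex.exp (((b / (1 + b ^ 2) : ℝ) : ℂ) * z - ((‖z‖ ^ 2 : ℝ) : ℂ) / 2)

/-! Translating by `c = b/(1+b²)` turns `|ψ_b|²` into `(π(1+b²))⁻¹ |z - b|² e^{-|z|²}`: the
zero `b(2+b²)/(1+b²)` of the linear factor is `c + b`, and the prefactor `e^{-c²}` cancels the
constant left over from completing the square in `2c Re z - |z|²`. The three functionals then
become integrals of polynomials in `Re z`, `Im z` against a centred Gaussian, which Fubini reduces
to the one-dimensional moments `∫ x^{2k} e^{-ax²} dx = (2k-1)‼/(2a)^k · √(π/a)`. -/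

open Real

section Gaussian

variable {a : ℝ}

theorem integral_odd_pow_mul_gaussian (a : ℝ) (k : ℕ) :
    ∫ x : ℝ, x ^ (2 * k + 1) * rexp (-a * x ^ 2) = 0 := by
  have h := integral_neg_eq_self (fun x : ℝ => x ^ (2 * k + 1) * rexp (-a * x ^ 2)) volume
  simp only [Odd.neg_pow (odd_two_mul_add_one k), even_two.neg_pow, neg_mul, integral_neg] at h ⊢
  linarith

open scoped Nat in
theorem integral_even_pow_mul_gaussian (ha : 0 < a) (k : ℕ) :
    ∫ x : ℝ, x ^ (2 * k) * rexp (-a * x ^ 2) = (2 * k - 1 : ℕ)‼ / (2 * a) ^ k * √(π / a) := by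
  calc ∫ x : ℝ, x ^ (2 * k) * rexp (-a * x ^ 2)
      = ∫ x : ℝ, |x| ^ ((2 * k : ℕ) : ℝ) * rexp (-a * |x| ^ (2 : ℝ)) := by
        congr 1 with x
        rw [rpow_natCast, rpow_two, sq_abs, (even_two_mul k).pow_abs]
    _ = 2 * (a ^ (-((2 * k : ℕ) + 1) / 2 : ℝ) * (1 / 2) * Gamma (((2 * k : ℕ) + 1) / 2)) := by
        rw [integral_comp_abs (f := fun x => x ^ ((2 * k : ℕ) : ℝ) * rexp (-a * x ^ (2 : ℝ))),
          integral_rpow_mul_exp_neg_mul_rpow two_pos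
            (neg_one_lt_zero.trans_le (Nat.cast_nonneg _)) ha]
    _ = (2 * k - 1 : ℕ)‼ / (2 * a) ^ k * √(π / a) := by
        have hk : (((2 * k : ℕ) : ℝ) + 1) / 2 = k + 1 / 2 := by push_cast; ring
        rw [neg_div, hk, Gamma_nat_add_half, rpow_neg ha.le, rpow_add ha, rpow_natCast,
          ← sqrt_eq_rpow, sqrt_div' _ ha.le, mul_pow]
        field_simp

theorem integrable_pow_mul_gaussian (ha : 0 < a) (k : ℕ) :
    Integrable fun x : ℝ => x ^ k * rexp (-a * x ^ 2) := by
  simpa [rpow_natCast] using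
    integrable_rpow_mul_exp_neg_mul_sq ha (s := k) (neg_one_lt_zero.trans_le k.cast_nonneg)

noncomputable def quarticGaussian (a c₀ c₁ c₂ c₃ c₄ x : ℝ) : ℝ :=
  (c₀ + c₁ * x + c₂ * x ^ 2 + c₃ * x ^ 3 + c₄ * x ^ 4) * rexp (-a * x ^ 2)

theorem quarticGaussian_eq (a c₀ c₁ c₂ c₃ c₄ : ℝ) :
    quarticGaussian a c₀ c₁ c₂ c₃ c₄ = fun x =>
      c₀ * (x ^ 0 * rexp (-a * x ^ 2)) + c₁ * (x ^ 1 * rexp (-a * x ^ 2)) +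
        c₂ * (x ^ 2 * rexp (-a * x ^ 2)) + c₃ * (x ^ 3 * rexp (-a * x ^ 2)) +
          c₄ * (x ^ 4 * rexp (-a * x ^ 2)) := by
  ext x
  simp only [quarticGaussian]
  ring

theorem integrable_quarticGaussian (ha : 0 < a) (c₀ c₁ c₂ c₃ c₄ : ℝ) :
    Integrable (quarticGaussian a c₀ c₁ c₂ c₃ c₄) := by
  have h k c := (integrable_pow_mul_gaussian ha k).const_mul c
  rw [quarticGaussian_eq]
  exact ((((h 0 c₀).add (h 1 c₁)).add (h 2 c₂)).add (h 3 c₃)).add (h 4 c₄)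

theorem integral_quarticGaussian (ha : 0 < a) (c₀ c₁ c₂ c₃ c₄ : ℝ) :
    ∫ x, quarticGaussian a c₀ c₁ c₂ c₃ c₄ x =
      (c₀ + c₂ / (2 * a) + 3 * c₄ / (4 * a ^ 2)) * √(π / a) := by
  have h k c := (integrable_pow_mul_gaussian ha k).const_mul c
  have m₀ : ∫ x, x ^ 0 * rexp (-a * x ^ 2) = √(π / a) := by
    simpa using integral_even_pow_mul_gaussian ha 0
  have m₂ : ∫ x, x ^ 2 * rexp (-a * x ^ 2) = √(π / a) / (2 * a) := by
    convert integral_even_pow_mul_gaussian ha 1 using 1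
    norm_num
    ring
  have m₄ : ∫ x, x ^ 4 * rexp (-a * x ^ 2) = 3 * √(π / a) / (4 * a ^ 2) := by
    convert integral_even_pow_mul_gaussian ha 2 using 1
    norm_num
    ring
  have h₁ := (h 0 c₀).fun_add (h 1 c₁)
  have h₂ := h₁.fun_add (h 2 c₂)
  have h₃ := h₂.fun_add (h 3 c₃)
  rw [quarticGaussian_eq, integral_add h₃ (h 4 c₄), integral_add h₂ (h 3 c₃),
    integral_add h₁ (h 2 c₂), integral_add (h 0 c₀) (h 1 c₁)]
  simp only [integral_const_mul, m₀, m₂, m₄, integral_odd_pow_mul_gaussian a 0,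
    integral_odd_pow_mul_gaussian a 1]
  ring

theorem Complex.sq_norm_eq_sq_add_sq (z : ℂ) : ‖z‖ ^ 2 = z.re ^ 2 + z.im ^ 2 := by
  rw [Complex.sq_norm, Complex.normSq_apply]
  ring

theorem exp_neg_mul_sq_norm (a : ℝ) (z : ℂ) :
    rexp (-a * ‖z‖ ^ 2) = rexp (-a * z.re ^ 2) * rexp (-a * z.im ^ 2) := by
  rw [Complex.sq_norm_eq_sq_add_sq, ← exp_add]
  ring_nf

theorem integral_re_mul_im (f g : ℝ → ℝ) :
    ∫ z : ℂ, f z.re * g z.im = (∫ x, f x) * ∫ y, g y := by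
  rw [← integral_prod_mul]
  exact Complex.volume_preserving_equiv_real_prod.integral_comp
    Complex.measurableEquivRealProd.measurableEmbedding fun p => f p.1 * g p.2

theorem MeasureTheory.Integrable.re_mul_im {f g : ℝ → ℝ} (hf : Integrable f) (hg : Integrable g) :
    Integrable fun z : ℂ => f z.re * g z.im :=
  (Complex.volume_preserving_equiv_real_prod.integrable_comp_emb
    Complex.measurableEquivRealProd.measurableEmbedding).mpr (hf.mul_prod hg)

theorem integral_norm_sub_sq_mul_gaussian (ha : 0 < a) (w : ℝ) :
    ∫ z : ℂ, ‖z - w‖ ^ 2 * rexp (-a * ‖z‖ ^ 2) = π / a * (1 / a + w ^ 2) := by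
  have h := integrable_quarticGaussian ha
  have hF (z : ℂ) : ‖z - w‖ ^ 2 * rexp (-a * ‖z‖ ^ 2) =
      quarticGaussian a (w ^ 2) (-2 * w) 1 0 0 z.re * quarticGaussian a 1 0 0 0 0 z.im +
        quarticGaussian a 1 0 0 0 0 z.re * quarticGaussian a 0 0 1 0 0 z.im := by
    rw [exp_neg_mul_sq_norm]
    simp only [quarticGaussian, Complex.sq_norm_eq_sq_add_sq, Complex.sub_re, Complex.sub_im,
      Complex.ofReal_re, Complex.ofReal_im]
    ring
  simp_rw [hF]
  rw [integral_add ((h _ _ _ _ _).re_mul_im (h _ _ _ _ _)) ((h _ _ _ _ _).re_mul_im (h _ _ _ _ _))]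
  simp only [integral_re_mul_im, integral_quarticGaussian ha]
  have hs : √(π / a) ^ 2 = π / a := sq_sqrt (by positivity)
  linear_combination (w ^ 2 + 1 / a) * hs

theorem integral_norm_sub_sq_add_mul_norm_sub_sq_mul_gaussian (ha : 0 < a) (u s w : ℝ) :
    ∫ z : ℂ, (‖z - u‖ ^ 2 + s) * ‖z - w‖ ^ 2 * rexp (-a * ‖z‖ ^ 2) =
      π / a * (2 / a ^ 2 + ((u + w) ^ 2 + s) / a + (u ^ 2 + s) * w ^ 2) := by
  have h := integrable_quarticGaussian ha
  have hF (z : ℂ) : (‖z - u‖ ^ 2 + s) * ‖z - w‖ ^ 2 * rexp (-a * ‖z‖ ^ 2) =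
      quarticGaussian a ((u ^ 2 + s) * w ^ 2) (-2 * u * w ^ 2 - 2 * w * (u ^ 2 + s))
          (u ^ 2 + 4 * u * w + w ^ 2 + s) (-2 * (u + w)) 1 z.re * quarticGaussian a 1 0 0 0 0 z.im +
        quarticGaussian a (u ^ 2 + w ^ 2 + s) (-2 * (u + w)) 2 0 0 z.re *
          quarticGaussian a 0 0 1 0 0 z.im +
        quarticGaussian a 1 0 0 0 0 z.re * quarticGaussian a 0 0 0 0 1 z.im := by
    rw [exp_neg_mul_sq_norm]
    simp only [quarticGaussian, Complex.sq_norm_eq_sq_add_sq, Complex.sub_re, Complex.sub_im,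
      Complex.ofReal_re, Complex.ofReal_im]
    ring
  simp_rw [hF]
  rw [integral_add (((h _ _ _ _ _).re_mul_im (h _ _ _ _ _)).fun_add
      ((h _ _ _ _ _).re_mul_im (h _ _ _ _ _))) ((h _ _ _ _ _).re_mul_im (h _ _ _ _ _)),
    integral_add ((h _ _ _ _ _).re_mul_im (h _ _ _ _ _)) ((h _ _ _ _ _).re_mul_im (h _ _ _ _ _))]
  simp only [integral_re_mul_im, integral_quarticGaussian ha]
  have hs : √(π / a) ^ 2 = π / a := sq_sqrt (by positivity)
  linear_combination (2 / a ^ 2 + ((u + w) ^ 2 + s) / a + (u ^ 2 + s) * w ^ 2) * hs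

end Gaussian

theorem sq_norm_psi_add (b : ℝ) (z : ℂ) :
    ‖psi b (z + (b / (1 + b ^ 2) : ℝ))‖ ^ 2 =
      (π * (1 + b ^ 2))⁻¹ * ‖z - b‖ ^ 2 * rexp (-‖z‖ ^ 2) := by
  set c := b / (1 + b ^ 2) with hc
  have hzero : b * (2 + b ^ 2) / (1 + b ^ 2) = c + b := by
    rw [hc]
    field_simp
    ring
  have hre : ((c : ℂ) * (z + c) - ((‖z + c‖ ^ 2 : ℝ) : ℂ) / 2).re = (c ^ 2 - ‖z‖ ^ 2) / 2 := by
    simp only [Complex.sub_re, Complex.mul_re, Complex.div_re, Complex.ofReal_re,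
      Complex.ofReal_im, Complex.add_re, Complex.add_im, Complex.sq_norm_eq_sq_add_sq]
    norm_num
    ring
  have hexp : rexp (2 * (-(1 / 2) * c ^ 2)) * rexp (2 * ((c ^ 2 - ‖z‖ ^ 2) / 2)) =
      rexp (-‖z‖ ^ 2) := by
    rw [← exp_add]
    ring_nf
  simp only [psi]
  rw [hzero, show z + c - ((c + b : ℝ) : ℂ) = z - b by push_cast; ring, norm_mul, norm_mul,
    Complex.norm_exp, hre, Complex.norm_real, norm_of_nonneg (by positivity), mul_pow, mul_pow,
    div_pow, sq_sqrt (by positivity), ← exp_nat_mul, ← exp_nat_mul]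
  push_cast
  linear_combination (π * (1 + b ^ 2))⁻¹ * ‖z - b‖ ^ 2 * hexp

theorem integral_comp_sq_norm_psi (b : ℝ) (F : ℂ → ℝ → ℝ) :
    ∫ z, F z (‖psi b z‖ ^ 2) = ∫ z, F (z + (b / (1 + b ^ 2) : ℝ))
      ((π * (1 + b ^ 2))⁻¹ * ‖z - b‖ ^ 2 * rexp (-‖z‖ ^ 2)) := by
  rw [← integral_add_right_eq_self _ ((b / (1 + b ^ 2) : ℝ) : ℂ)]
  simp only [sq_norm_psi_add]

theorem Mfun_psi (b : ℝ) : Mfun (psi b) = 1 := by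
  have hF (z : ℂ) : (π * (1 + b ^ 2))⁻¹ * ‖z - b‖ ^ 2 * rexp (-‖z‖ ^ 2) =
      (π * (1 + b ^ 2))⁻¹ * (‖z - b‖ ^ 2 * rexp (-1 * ‖z‖ ^ 2)) := by
    rw [neg_one_mul]
    ring
  rw [Mfun, integral_comp_sq_norm_psi b fun _ t => t]
  simp_rw [hF]
  rw [integral_const_mul, integral_norm_sub_sq_mul_gaussian one_pos]
  field_simp

theorem Pfun_psi (b : ℝ) : Pfun (psi b) = 1 / (1 + b ^ 2) ^ 2 := by
  rw [Pfun, integral_comp_sq_norm_psi b fun z t => (‖z‖ ^ 2 - 1) * t]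
  set c := b / (1 + b ^ 2) with hc
  have hF (z : ℂ) :
      (‖z + c‖ ^ 2 - 1) * ((π * (1 + b ^ 2))⁻¹ * ‖z - b‖ ^ 2 * rexp (-‖z‖ ^ 2)) =
        (π * (1 + b ^ 2))⁻¹ * ((‖z - (-c : ℝ)‖ ^ 2 + -1) * ‖z - b‖ ^ 2 * rexp (-1 * ‖z‖ ^ 2)) := by
    rw [Complex.ofReal_neg, sub_neg_eq_add, neg_one_mul]
    ring
  simp_rw [hF]
  rw [integral_const_mul, integral_norm_sub_sq_add_mul_norm_sub_sq_mul_gaussian one_pos, hc]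
  field_simp
  ring

theorem Hfun_psi (b : ℝ) :
    Hfun (psi b) = ((1 + b ^ 2) ^ 2 - 1 / 2) / (8 * π * (1 + b ^ 2) ^ 2) := by
  have h4 (z : ℂ) : ‖psi b z‖ ^ 4 = (‖psi b z‖ ^ 2) ^ 2 := by ring
  have hF (z : ℂ) : ((π * (1 + b ^ 2))⁻¹ * ‖z - b‖ ^ 2 * rexp (-‖z‖ ^ 2)) ^ 2 =
      (π * (1 + b ^ 2))⁻¹ ^ 2 * ((‖z - b‖ ^ 2 + 0) * ‖z - b‖ ^ 2 * rexp (-2 * ‖z‖ ^ 2)) := by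
    rw [mul_pow, mul_pow, ← exp_nat_mul]
    push_cast
    ring_nf
  simp_rw [Hfun, h4]
  rw [integral_comp_sq_norm_psi b fun _ t => t ^ 2]
  simp_rw [hF]
  rw [integral_const_mul, integral_norm_sub_sq_add_mul_norm_sub_sq_mul_gaussian two_pos]
  field_simp
  ring

theorem stmt11_general (b : ℝ) :
    Mfun (psi b) = 1 ∧
    ∀ μ : ℝ, 0 < μ → Gfun μ (psi b) = 1 + (μ - 1 / 2) / (1 + b ^ 2) ^ 2 := by
  refine ⟨Mfun_psi b, fun μ _ => ?_⟩
  rw [Gfun, Hfun_psi, Pfun_psi]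
  field_simp
  ring

/-- `M(ψ_b) = 1` and `G_μ(ψ_b) = 1 + (μ - 1/2)/(1+b²)²` for every `μ > 0`. -/
theorem stmt11 (b : ℝ) (hb : 0 ≤ b) :
    Mfun (psi b) = 1 ∧
    ∀ μ : ℝ, 0 < μ → Gfun μ (psi b) = 1 + (μ - 1 / 2) / (1 + b ^ 2) ^ 2 :=
  stmt11_general b
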